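/- Bound on the norm of the inverse covariance of the uniform G-optimal design: Let Z ⊂ ℝ^{D} be a finite set of K vectors spanning ℝ^D, and let λ⋆ be a minimizer of λ ↦ max_{z'∈Z} z'^T Σ(λ)^{-1} z' over the simplex (with Σ(λ) = Σ_z λ_z z z^T). Then ‖Σ(λ⋆)^{-1}‖ ≤ D / ν_min, where ν_min is the smallest eigenvalue of (1/K) Σ_{z∈Z} z z^T. -/

import Mathlib

/-!
Kiefer–Wolfowitz: at a design `λ` maximising `det Σ(λ)` over the simplex, shifting weight towards
a vector `z` changes the determinant at rate `det Σ(λ) · (zᵀ Σ(λ)⁻¹ z - D)`, so every leverage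
`zᵀ Σ(λ)⁻¹ z` is at most `D`; the minimiser `λ⋆` of the G-objective inherits this bound.
For the positive semidefinite `N = Σ(λ⋆)⁻¹ = Bᵀ B`, the bound `Σ_z (zᵀ x)² ≥ K ν_min ‖x‖²` applied to
the rows `x` of `B` gives `K ν_min ‖N‖ ≤ K ν_min tr N ≤ Σ_z zᵀ N z ≤ K D`.
-/

open Matrix
open scoped Classical
open scoped Matrix.Norms.L2Operator

/-- The G-optimal design objective over a finite set of vectors:
`h(λ) = max_{z'∈Z} z'ᵀ (Σ_{z∈Z} λ_z z zᵀ)⁻¹ z'` when the covariance matrix is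
invertible, and `+∞` otherwise. -/
noncomputable def gObj {D : ℕ} (Z : Finset (Fin D → ℝ)) (hZ : Z.Nonempty)
    (lam : (Fin D → ℝ) → ℝ) : EReal :=
  if IsUnit (∑ z ∈ Z, lam z • vecMulVec z z) then
    ((Z.sup' hZ fun z' => z' ⬝ᵥ (∑ z ∈ Z, lam z • vecMulVec z z)⁻¹.mulVec z' : ℝ) : EReal)
  else ⊤

open scoped MatrixOrder

theorem le_of_forall_one_sub_pow_mul_add_le_one {k : ℕ} {q : ℝ}
    (h : ∀ t ∈ Set.Ico (0 : ℝ) 1, (1 - t) ^ k * (1 + (q - 1) * t) + t ≤ 1) : q ≤ k := by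
  set p : ℝ → ℝ := fun t => (1 - t) ^ k * (1 + (q - 1) * t) + t
  have hmax : IsMaxOn p (Set.Ico 0 1) 0 := fun t ht => by simpa [p] using h t ht
  have hderiv : HasDerivAt p (q - k) 0 := by
    have h1 : HasDerivAt (fun t : ℝ => 1 - t) (-1) 0 := by
      simpa using (hasDerivAt_id (0 : ℝ)).const_sub 1
    have h2 : HasDerivAt (fun t : ℝ => 1 + (q - 1) * t) (q - 1) 0 := by
      simpa using ((hasDerivAt_id (0 : ℝ)).const_mul (q - 1)).const_add 1
    exact (((h1.fun_pow k).fun_mul h2).fun_add (hasDerivAt_id' 0)).congr_deriv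
      (by norm_num; ring)
  have hcone : (1 / 2 : ℝ) ∈ posTangentConeAt (Set.Ico 0 1) 0 :=
    mem_posTangentConeAt_of_segment_subset
      (by norm_num [segment_eq_Icc, Set.Icc_subset_Ico_iff])
  have := hmax.localize.hasFDerivWithinAt_nonpos hderiv.hasDerivWithinAt.hasFDerivWithinAt hcone
  norm_num at this
  linarith

namespace Matrix

variable {m n : Type*} [Fintype m] [Fintype n]

theorem det_add_vecMulVec {R : Type*} [CommRing R] [DecidableEq n] {A : Matrix n n R}
    (hA : IsUnit A.det) (u v : n → R) :
    (A + vecMulVec u v).det = A.det * (1 + v ⬝ᵥ A⁻¹ *ᵥ u) := by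
  rw [vecMulVec_eq Unit, det_add_replicateCol_mul_replicateRow hA,
    det_unique (1 + replicateRow Unit v * A⁻¹ * replicateCol Unit u), Matrix.mul_assoc,
    ← replicateCol_mulVec, add_apply, one_apply_eq, replicateRow_mul_replicateCol_apply]

theorem dotProduct_conjTranspose_mul_self_mulVec (B : Matrix m n ℝ) (x : n → ℝ) :
    x ⬝ᵥ (Bᴴ * B) *ᵥ x = ∑ j, (B j ⬝ᵥ x) ^ 2 := by
  rw [← mulVec_mulVec, dotProduct_mulVec, vecMul_conjTranspose, star_trivial, dotProduct_comm]
  simp only [dotProduct, sq, mulVec, Pi.star_apply, star_trivial]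

theorem trace_conjTranspose_mul_self_eq_sum (B : Matrix m n ℝ) :
    (Bᴴ * B).trace = ∑ j, B j ⬝ᵥ B j := by
  simp only [trace, diag, mul_apply, conjTranspose_apply, star_trivial, dotProduct]
  exact Finset.sum_comm

theorem l2_opNorm_mul_self_le_sum [DecidableEq n] (B : Matrix m n ℝ) :
    ‖B‖ * ‖B‖ ≤ ∑ j, B j ⬝ᵥ B j := by
  have hS : 0 ≤ ∑ j, B j ⬝ᵥ B j := Finset.sum_nonneg fun j _ => dotProduct_self_star_nonneg _
  suffices ‖B‖ ≤ √(∑ j, B j ⬝ᵥ B j) by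
    simpa [Real.mul_self_sqrt hS] using mul_self_le_mul_self (norm_nonneg B) this
  rw [l2_opNorm_def]
  refine ContinuousLinearMap.opNorm_le_bound _ (Real.sqrt_nonneg _) fun x => ?_
  rw [EuclideanSpace.norm_eq, EuclideanSpace.norm_eq, ← Real.sqrt_mul hS]
  refine Real.sqrt_le_sqrt ?_
  simp only [LinearEquiv.trans_apply, LinearMap.coe_toContinuousLinearMap', ofLp_toLpLin,
    toLin'_apply, Real.norm_eq_abs, sq_abs, Finset.sum_mul]
  refine Finset.sum_le_sum fun j _ => ?_
  simpa [mulVec, dotProduct, sq] using Finset.sum_mul_sq_le_sq_mul_sq Finset.univ (B j) x.ofLp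

variable [DecidableEq n]

theorem PosSemidef.exists_eq_conjTranspose_mul_self {N : Matrix n n ℝ} (hN : N.PosSemidef) :
    ∃ B : Matrix n n ℝ, N = Bᴴ * B :=
  ⟨CFC.sqrt N, by rw [(CFC.sqrt_nonneg N).posSemidef.1.eq, CFC.sqrt_mul_sqrt_self N hN.nonneg]⟩

theorem PosSemidef.l2_opNorm_le_trace {N : Matrix n n ℝ} (hN : N.PosSemidef) : ‖N‖ ≤ N.trace := by
  obtain ⟨B, rfl⟩ := hN.exists_eq_conjTranspose_mul_self
  rw [l2_opNorm_conjTranspose_mul_self, trace_conjTranspose_mul_self_eq_sum]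
  exact l2_opNorm_mul_self_le_sum B

theorem PosSemidef.mul_trace_le_sum_dotProduct_mulVec {N : Matrix n n ℝ} (hN : N.PosSemidef)
    {ι : Type*} (s : Finset ι) (v : ι → n → ℝ) {μ : ℝ}
    (hv : ∀ x, μ * (x ⬝ᵥ x) ≤ ∑ i ∈ s, (v i ⬝ᵥ x) ^ 2) :
    μ * N.trace ≤ ∑ i ∈ s, v i ⬝ᵥ N *ᵥ v i := by
  obtain ⟨B, rfl⟩ := hN.exists_eq_conjTranspose_mul_self
  simp_rw [trace_conjTranspose_mul_self_eq_sum, dotProduct_conjTranspose_mul_self_mulVec,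
    Finset.mul_sum]
  rw [Finset.sum_comm]
  exact Finset.sum_le_sum fun j _ => (hv (B j)).trans_eq (by simp_rw [dotProduct_comm])

theorem PosSemidef.l2_opNorm_le_of_forall_dotProduct_mulVec_le {N : Matrix n n ℝ}
    (hN : N.PosSemidef) {ι : Type*} (s : Finset ι) (v : ι → n → ℝ) {μ c : ℝ} (hμ : 0 < μ)
    (hv : ∀ x, μ * (x ⬝ᵥ x) ≤ ∑ i ∈ s, (v i ⬝ᵥ x) ^ 2) (hc : ∀ i ∈ s, v i ⬝ᵥ N *ᵥ v i ≤ c) :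
    ‖N‖ ≤ s.card * c / μ := by
  rw [le_div_iff₀ hμ, mul_comm]
  calc μ * ‖N‖ ≤ μ * N.trace := mul_le_mul_of_nonneg_left hN.l2_opNorm_le_trace hμ.le
    _ ≤ ∑ i ∈ s, v i ⬝ᵥ N *ᵥ v i := hN.mul_trace_le_sum_dotProduct_mulVec s v hv
    _ ≤ ∑ _ ∈ s, c := Finset.sum_le_sum hc
    _ = s.card * c := by simp

theorem IsHermitian.mul_dotProduct_self_le {A : Matrix n n ℝ} (hA : A.IsHermitian) {ν : ℝ}
    (h : ∀ μ ∈ spectrum ℝ A, ν ≤ μ) (x : n → ℝ) : ν * (x ⬝ᵥ x) ≤ x ⬝ᵥ A *ᵥ x := by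
  have := ((algebraMap_le_iff_le_spectrum hA.isSelfAdjoint).2 h).dotProduct_mulVec_nonneg x
  simpa [Algebra.algebraMap_eq_smul_one, sub_mulVec, smul_mulVec] using this

end Matrix

section Gram

variable {ι n : Type*} [Fintype n] (s : Finset ι) (v : ι → n → ℝ)

theorem dotProduct_sum_smul_vecMulVec_mulVec (w : ι → ℝ) (x : n → ℝ) :
    x ⬝ᵥ (∑ i ∈ s, w i • vecMulVec (v i) (v i)) *ᵥ x = ∑ i ∈ s, w i * (v i ⬝ᵥ x) ^ 2 := by
  simp only [sum_mulVec, smul_mulVec, vecMulVec_mulVec, dotProduct_sum, dotProduct_smul,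
    smul_eq_mul]
  refine Finset.sum_congr rfl fun i _ => ?_
  rw [op_smul_eq_mul, dotProduct_comm x, sq]

theorem posSemidef_sum_smul_vecMulVec {w : ι → ℝ} (hw : ∀ i ∈ s, 0 ≤ w i) :
    (∑ i ∈ s, w i • vecMulVec (v i) (v i)).PosSemidef :=
  posSemidef_sum _ fun i hi => by
    simpa using (posSemidef_vecMulVec_self_star (v i)).smul (hw i hi)

theorem posDef_sum_smul_vecMulVec (hv : Submodule.span ℝ (v '' s) = ⊤) {w : ι → ℝ}
    (hw : ∀ i ∈ s, 0 < w i) : (∑ i ∈ s, w i • vecMulVec (v i) (v i)).PosDef := by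
  refine .of_dotProduct_mulVec_pos
    (posSemidef_sum_smul_vecMulVec s v fun i hi => (hw i hi).le).1 fun x hx => ?_
  rw [star_trivial, dotProduct_sum_smul_vecMulVec_mulVec]
  obtain ⟨i, hi, hix⟩ : ∃ i ∈ s, v i ⬝ᵥ x ≠ 0 := by
    by_contra! h
    have : ∀ y ∈ Submodule.span ℝ (v '' s), y ⬝ᵥ x = 0 := by
      intro y hy
      induction hy using Submodule.span_induction with
      | mem y hy => obtain ⟨i, hi, rfl⟩ := hy; exact h i hi
      | zero => exact zero_dotProduct x
      | add y z _ _ hy hz => rw [add_dotProduct, hy, hz, add_zero]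
      | smul c y _ hy => rw [smul_dotProduct, hy, smul_zero]
    exact hx (dotProduct_self_eq_zero.mp (this x (hv ▸ Submodule.mem_top)))
  exact Finset.sum_pos' (fun j hj => by have := hw j hj; positivity)
    ⟨i, hi, by have := hw i hi; positivity⟩

end Gram

def designMatrix {ι n : Type*} [Fintype ι] (v : ι → n → ℝ) (w : ι → ℝ) : Matrix n n ℝ :=
  ∑ i, w i • vecMulVec (v i) (v i)

section Design

variable {ι n : Type*} [Fintype ι] (v : ι → n → ℝ)

theorem designMatrix_add_smul_single [DecidableEq ι] (w : ι → ℝ) (s t : ℝ) (i : ι) :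
    designMatrix v (s • w + t • Pi.single i 1)
      = s • designMatrix v w + vecMulVec (t • v i) (v i) := by
  simp [designMatrix, add_smul, Finset.sum_add_distrib, Finset.smul_sum, smul_smul,
    Pi.single_apply, smul_vecMulVec]

variable [Fintype n] [DecidableEq n]

theorem dotProduct_inv_designMatrix_mulVec_le_of_isMaxOn [DecidableEq ι] {w : ι → ℝ}
    (hw : w ∈ stdSimplex ℝ ι) (hmax : IsMaxOn (fun w => (designMatrix v w).det) (stdSimplex ℝ ι) w)
    (hdet : 0 < (designMatrix v w).det) (i : ι) :
    v i ⬝ᵥ (designMatrix v w)⁻¹ *ᵥ v i ≤ Fintype.card n := by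
  set M := designMatrix v w
  set q := v i ⬝ᵥ M⁻¹ *ᵥ v i
  refine le_of_forall_one_sub_pow_mul_add_le_one fun t ⟨ht0, ht1⟩ => ?_
  have hmem : (1 - t) • w + t • Pi.single i 1 ∈ stdSimplex ℝ ι :=
    convex_stdSimplex ℝ ι hw (single_mem_stdSimplex ℝ i) (by linarith) ht0 (by ring)
  have hunit : IsUnit ((1 - t) • M).det := by
    rw [det_smul]
    exact (mul_pos (pow_pos (by linarith) _) hdet).ne'.isUnit
  have hdet_t : (1 - t) * (designMatrix v ((1 - t) • w + t • Pi.single i 1)).det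
      = M.det * ((1 - t) ^ Fintype.card n * (1 + (q - 1) * t)) := by
    have : Invertible (1 - t) := invertibleOfNonzero (by linarith)
    rw [designMatrix_add_smul_single, det_add_vecMulVec hunit, det_smul,
      Matrix.inv_smul _ _ hdet.ne'.isUnit, invOf_eq_inv]
    simp only [smul_mulVec, mulVec_smul, dotProduct_smul, smul_eq_mul]
    field_simp
    ring
  have hle : (designMatrix v ((1 - t) • w + t • Pi.single i 1)).det ≤ M.det := hmax hmem
  refine le_of_mul_le_mul_left ?_ hdet
  linarith [mul_le_mul_of_nonneg_left hle (sub_nonneg.2 ht1.le)]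

theorem exists_mem_stdSimplex_forall_dotProduct_inv_designMatrix_mulVec_le [Nonempty ι]
    (hv : Submodule.span ℝ (Set.range v) = ⊤) :
    ∃ w ∈ stdSimplex ℝ ι, IsUnit (designMatrix v w) ∧
      ∀ i, v i ⬝ᵥ (designMatrix v w)⁻¹ *ᵥ v i ≤ Fintype.card n := by
  have hcont : Continuous fun w => (designMatrix v w).det := by
    unfold designMatrix
    fun_prop
  have huniform : (fun _ => (Fintype.card ι : ℝ)⁻¹) ∈ stdSimplex ℝ ι :=
    ⟨fun _ => by positivity, by simp⟩
  obtain ⟨w, hw, hmax⟩ :=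
    (isCompact_stdSimplex ℝ ι).exists_isMaxOn ⟨_, huniform⟩ hcont.continuousOn
  have hdet : 0 < (designMatrix v w).det :=
    (posDef_sum_smul_vecMulVec Finset.univ v (by simpa using hv) fun _ _ => by
      positivity).det_pos.trans_le (hmax huniform)
  exact ⟨w, hw, (isUnit_iff_isUnit_det _).2 hdet.ne'.isUnit,
    dotProduct_inv_designMatrix_mulVec_le_of_isMaxOn v hw hmax hdet⟩

end Design

theorem exists_forall_dotProduct_inv_sum_smul_vecMulVec_mulVec_le {n : Type*} [Fintype n]
    [DecidableEq n]
    (Z : Finset (n → ℝ)) (hZ : Z.Nonempty) (hspan : Submodule.span ℝ (Z : Set (n → ℝ)) = ⊤) :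
    ∃ lam : (n → ℝ) → ℝ, (∀ z ∈ Z, 0 ≤ lam z) ∧ ∑ z ∈ Z, lam z = 1 ∧
      IsUnit (∑ y ∈ Z, lam y • vecMulVec y y) ∧
      ∀ z ∈ Z, z ⬝ᵥ (∑ y ∈ Z, lam y • vecMulVec y y)⁻¹ *ᵥ z ≤ Fintype.card n := by
  have : Nonempty Z := hZ.coe_sort
  obtain ⟨w, hw, hunit, hleverage⟩ :=
    exists_mem_stdSimplex_forall_dotProduct_inv_designMatrix_mulVec_le (fun z : Z => (z : n → ℝ))
      (by simpa using hspan)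
  set lam := Function.extend (fun z : Z => (z : n → ℝ)) w 0
  have hlam : (fun z : Z => lam z) = w := funext (Subtype.val_injective.extend_apply w 0)
  have hM : ∑ y ∈ Z, lam y • vecMulVec y y = designMatrix (fun z : Z => (z : n → ℝ)) w := by
    rw [designMatrix, ← hlam]
    exact (Finset.sum_coe_sort Z _).symm
  refine ⟨lam, fun z hz => (hw.1 ⟨z, hz⟩).trans_eq (congrFun hlam ⟨z, hz⟩).symm, ?_,
    hM ▸ hunit, fun z hz => hM ▸ hleverage ⟨z, hz⟩⟩
  rw [← Finset.sum_coe_sort Z, ← hw.2, ← hlam]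

theorem gObj_le_coe_iff {D : ℕ} (Z : Finset (Fin D → ℝ)) (hZ : Z.Nonempty)
    (lam : (Fin D → ℝ) → ℝ) (c : ℝ) :
    gObj Z hZ lam ≤ c ↔ IsUnit (∑ z ∈ Z, lam z • vecMulVec z z) ∧
      ∀ z ∈ Z, z ⬝ᵥ (∑ y ∈ Z, lam y • vecMulVec y y)⁻¹ *ᵥ z ≤ c := by
  unfold gObj
  split_ifs with h <;> simp [h, Finset.sup'_le_iff]

/-- Bound on the norm of the inverse covariance of the G-optimal design: if the finite
set `Z ⊆ ℝ^D` of `K` vectors spans `ℝ^D` and `λ⋆` minimizes the G-optimal design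
objective over the simplex on `Z`, then `‖Σ(λ⋆)⁻¹‖ ≤ D / ν_min` in the `L²` operator
norm, where `ν_min` is the smallest eigenvalue of `(1/K) Σ_{z∈Z} z zᵀ`. -/
theorem inverse_covariance_norm_bound {D : ℕ}
    (Z : Finset (Fin D → ℝ)) (hZne : Z.Nonempty)
    (hspan : Submodule.span ℝ (Z : Set (Fin D → ℝ)) = ⊤)
    (K : ℕ) (hK : K = Z.card)
    (lamstar : (Fin D → ℝ) → ℝ)
    (hlam : (∀ z ∈ Z, 0 ≤ lamstar z) ∧ ∑ z ∈ Z, lamstar z = 1)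
    (hmin : ∀ lam : (Fin D → ℝ) → ℝ,
      (∀ z ∈ Z, 0 ≤ lam z) → ∑ z ∈ Z, lam z = 1 →
        gObj Z hZne lamstar ≤ gObj Z hZne lam)
    (nu : ℝ)
    (hnu : IsLeast (spectrum ℝ (((K : ℝ)⁻¹ • ∑ z ∈ Z, vecMulVec z z :
      Matrix (Fin D) (Fin D) ℝ))) nu) :
    ‖(∑ z ∈ Z, lamstar z • vecMulVec z z)⁻¹‖ ≤ (D : ℝ) / nu := by
  subst hK
  set M := ∑ z ∈ Z, lamstar z • vecMulVec z z
  obtain ⟨lam, hlam0, hlam1, hopt⟩ :=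
    exists_forall_dotProduct_inv_sum_smul_vecMulVec_mulVec_le Z hZne hspan
  have hleverage : ∀ z ∈ Z, z ⬝ᵥ M⁻¹ *ᵥ z ≤ D :=
    ((gObj_le_coe_iff Z hZne lamstar D).1 <| (hmin lam hlam0 hlam1).trans <|
      (gObj_le_coe_iff Z hZne lam D).2 (by simpa using hopt)).2
  have hcard : (0 : ℝ) < Z.card := by exact_mod_cast hZne.card_pos
  rw [Finset.smul_sum] at hnu
  have hV : (∑ z ∈ Z, (Z.card : ℝ)⁻¹ • vecMulVec z z).PosDef :=
    posDef_sum_smul_vecMulVec Z (fun z => z) (by simpa using hspan) fun _ _ => inv_pos.2 hcard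
  have hnu_pos : 0 < nu := hV.isStrictlyPositive.spectrum_pos hnu.1
  have hlower (x : Fin D → ℝ) : Z.card * nu * (x ⬝ᵥ x) ≤ ∑ z ∈ Z, (z ⬝ᵥ x) ^ 2 := by
    have := hV.1.mul_dotProduct_self_le hnu.2 x
    rw [dotProduct_sum_smul_vecMulVec_mulVec, ← Finset.mul_sum, le_inv_mul_iff₀ hcard] at this
    simpa only [mul_assoc] using this
  have hN : M⁻¹.PosSemidef := (posSemidef_sum_smul_vecMulVec Z (fun z => z) hlam.1).inv
  calc ‖M⁻¹‖ ≤ Z.card * D / (Z.card * nu) :=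
        hN.l2_opNorm_le_of_forall_dotProduct_mulVec_le Z (fun z => z) (by positivity) hlower
          hleverage
    _ = D / nu := mul_div_mul_left _ _ hcard.ne'
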